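/- Let D ≥ 2, let m_p, m_q > 0, and let B : ℝ_{≥0} × [−1,1] → ℝ_{≥0} be measurable. Let f, g : ℝ^D → ℝ be nonnegative measurable functions such that both (v, v_*, σ) ↦ B(|v − v_*|, ĝ·σ) f(v) g(v_*) and (v, v_*, σ) ↦ B(|v − v_*|, ĝ·σ) f(v') g(v'_*) are integrable over ℝ^D × ℝ^D × S^{D−1}, where ĝ = (v − v_*)/|v − v_*|, v' = (m_p v + m_q v_* + m_q|v − v_*|σ)/(m_p + m_q), v'_* = (m_p v + m_q v_* − m_p|v − v_*|σ)/(m_p + m_q). Then the multispecies Boltzmann collision operator Q_{p,q}[f,g](v) = ∫∫ B(|v − v_*|, ĝ·σ)·(f(v')g(v'_*) − f(v)g(v_*)) dv_* dσ satisfies ∫_{ℝ^D} Q_{p,q}[f,g](v) dv = 0; that is, each species' mass is conserved by interspecies collisions. -/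

import Mathlib

open MeasureTheory

/-- The surface measure on the unit sphere in `ℝ^D`. -/
noncomputable def sphereMeasure (D : ℕ) :
    Measure (Metric.sphere (0 : EuclideanSpace ℝ (Fin D)) 1) :=
  (volume : Measure (EuclideanSpace ℝ (Fin D))).toSphere

/-- Post-collisional velocity `v'` in the multispecies parametrization. -/
noncomputable def vPrime (D : ℕ) (mp mq : ℝ) (v vs : EuclideanSpace ℝ (Fin D))
    (σ : Metric.sphere (0 : EuclideanSpace ℝ (Fin D)) 1) : EuclideanSpace ℝ (Fin D) :=
  (mp + mq)⁻¹ • (mp • v + mq • vs + (mq * ‖v - vs‖) • (σ : EuclideanSpace ℝ (Fin D)))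

/-- Post-collisional velocity `v'_*` in the multispecies parametrization. -/
noncomputable def vsPrime (D : ℕ) (mp mq : ℝ) (v vs : EuclideanSpace ℝ (Fin D))
    (σ : Metric.sphere (0 : EuclideanSpace ℝ (Fin D)) 1) : EuclideanSpace ℝ (Fin D) :=
  (mp + mq)⁻¹ • (mp • v + mq • vs - (mp * ‖v - vs‖) • (σ : EuclideanSpace ℝ (Fin D)))

/-- The deviation angle cosine `cos θ = ĝ ⬝ σ`, with `ĝ = (v − v_*)/|v − v_*|`. -/
noncomputable def cosDev (D : ℕ) (v vs : EuclideanSpace ℝ (Fin D))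
    (σ : Metric.sphere (0 : EuclideanSpace ℝ (Fin D)) 1) : ℝ :=
  inner ℝ (‖v - vs‖⁻¹ • (v - vs)) (σ : EuclideanSpace ℝ (Fin D))

/-!
Write `a = m_p / (m_p + m_q)`, `b = m_q / (m_p + m_q)` and parametrize `(v, v_*)` by the centre of
mass `u` and the relative velocity `r ĝ` in polar form: `v = u + b r ĝ`, `v_* = u - a r ĝ`. In
these coordinates `v' = u + b r σ` and `v'_* = u - a r σ`, so exchanging `ĝ` and `σ` turns the
gain integrand into the loss integrand. Both the change of coordinates (a shear followed by polar
coordinates) and the exchange preserve the relevant measures, hence the gain and loss terms have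
the same integral.
-/

open Metric Set Module

namespace MeasureTheory

theorem MeasurePreserving.integral_comp_of_aestronglyMeasurable {α β G : Type*}
    [MeasurableSpace α] [MeasurableSpace β] [NormedAddCommGroup G] [NormedSpace ℝ G]
    {μ : Measure α} {ν : Measure β} {Ψ : α → β} (hΨ : MeasurePreserving Ψ μ ν) {F : β → G}
    (hF : AEStronglyMeasurable F ν) : ∫ x, F (Ψ x) ∂μ = ∫ y, F y ∂ν := by
  rw [← hΨ.map_eq] at hF ⊢
  exact (integral_map hΨ.aemeasurable hF).symm

theorem MeasurePreserving.integral_eq_of_comp_comp_eq {α β G : Type*}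
    [MeasurableSpace α] [MeasurableSpace β] [NormedAddCommGroup G] [NormedSpace ℝ G]
    {μ : Measure α} {ν : Measure β} {Ψ : α → β} {W : α → α} (hΨ : MeasurePreserving Ψ μ ν)
    (hW : MeasurePreserving W μ μ) {F F' : β → G} (hF : AEStronglyMeasurable F ν)
    (hF' : AEStronglyMeasurable F' ν) (h : ∀ x, F (Ψ (W x)) = F' (Ψ x)) :
    ∫ y, F y ∂ν = ∫ y, F' y ∂ν :=
  calc ∫ y, F y ∂ν = ∫ x, F (Ψ x) ∂μ := (hΨ.integral_comp_of_aestronglyMeasurable hF).symm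
    _ = ∫ x, F (Ψ (W x)) ∂μ :=
      (hW.integral_comp_of_aestronglyMeasurable (hF.comp_measurePreserving hΨ)).symm
    _ = ∫ x, F' (Ψ x) ∂μ := by simp only [h]
    _ = ∫ y, F' y ∂ν := hΨ.integral_comp_of_aestronglyMeasurable hF'

theorem integral_integral_integral {α β γ G : Type*} [MeasurableSpace α] [MeasurableSpace β]
    [MeasurableSpace γ] [NormedAddCommGroup G] [NormedSpace ℝ G] {μ : Measure α} {ν : Measure β}
    {ρ : Measure γ} [SFinite μ] [SFinite ν] [SFinite ρ] {F : α × β × γ → G}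
    (hF : Integrable F (μ.prod (ν.prod ρ))) :
    ∫ x, ∫ y, ∫ z, F (x, y, z) ∂ρ ∂ν ∂μ = ∫ w, F w ∂(μ.prod (ν.prod ρ)) := by
  rw [integral_prod _ hF]
  refine integral_congr_ae ?_
  filter_upwards [hF.prod_right_ae] with x hx
  exact (integral_prod _ hx).symm

theorem measurePreserving_swap_snd_fst_fst_snd_snd {α β γ : Type*} [MeasurableSpace α]
    [MeasurableSpace β] [MeasurableSpace γ] (μ : Measure α) (ν : Measure β) (ρ : Measure γ)
    [SFinite μ] [SFinite ν] [SFinite ρ] :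
    MeasurePreserving (fun z : α × (β × γ) × β => (z.1, (z.2.2, z.2.1.2), z.2.1.1))
      (μ.prod ((ν.prod ρ).prod ν)) (μ.prod ((ν.prod ρ).prod ν)) :=
  (MeasurePreserving.id μ).prod (Measure.measurePreserving_swap.comp
    (((MeasurePreserving.id ν).prod Measure.measurePreserving_swap).comp
      (measurePreserving_prodAssoc ν ρ ν)))

theorem measurePreserving_add_smul_sub_smul {R E : Type*} [CommRing R] [AddCommGroup E]
    [Module R E] [MeasurableSpace E] [MeasurableAdd₂ E] [MeasurableConstSMul R E]
    (μ : Measure E) [SFinite μ] [μ.IsAddLeftInvariant] {a b : R} (hab : a + b = 1) :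
    MeasurePreserving (fun p : E × E => (p.1 + b • p.2, p.1 - a • p.2)) (μ.prod μ) (μ.prod μ) := by
  obtain rfl := eq_sub_of_add_eq' hab
  have hskew : MeasurePreserving (fun p : E × E => (p.1, -a • p.1 + p.2)) (μ.prod μ) (μ.prod μ) :=
    (MeasurePreserving.id μ).skew_product (by fun_prop)
      (ae_of_all _ fun w => map_add_left_eq_self μ (-a • w))
  convert Measure.measurePreserving_swap.comp ((measurePreserving_prod_add_swap μ μ).comp
    (hskew.comp Measure.measurePreserving_swap)) using 1
  funext p
  simp only [Function.comp_apply, Prod.fst_swap, Prod.snd_swap, Prod.swap_prod_mk, Prod.mk.injEq]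
  constructor <;> module

end MeasureTheory

theorem add_smul_sub_sub_smul {R M : Type*} [CommRing R] [AddCommGroup M] [Module R M] {a b : R}
    (hab : a + b = 1) (u w : M) : (u + b • w) - (u - a • w) = w := by
  obtain rfl := eq_sub_of_add_eq' hab
  module

section CentreOfMassPolar
variable {E : Type*} [NormedAddCommGroup E] [NormedSpace ℝ E]

/-- For `a + b = 1`, the inverse of `(v, v_*) ↦ (a v + b v_*, v - v_*)`, with `v - v_*` written in
polar form `r ĝ`; the last factor `σ` is carried along. -/
def velocitiesOfCenterPolar (a b : ℝ)
    (z : E × (sphere (0 : E) 1 × Ioi (0 : ℝ)) × sphere (0 : E) 1) : E × E × sphere (0 : E) 1 :=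
  (z.1 + b • (z.2.1.2 : ℝ) • (z.2.1.1 : E), z.1 - a • (z.2.1.2 : ℝ) • (z.2.1.1 : E), z.2.2)

theorem norm_add_smul_sub_sub_smul {a b : ℝ} (hab : a + b = 1) (u : E) (s : sphere (0 : E) 1)
    (r : Ioi (0 : ℝ)) : ‖(u + b • (r : ℝ) • (s : E)) - (u - a • (r : ℝ) • (s : E))‖ = r := by
  rw [add_smul_sub_sub_smul hab, norm_smul, norm_eq_of_mem_sphere, mul_one,
    Real.norm_of_nonneg r.2.le]

variable [MeasurableSpace E] [BorelSpace E] [FiniteDimensional ℝ E] [Nontrivial E]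
  (μ : Measure E) [μ.IsAddHaarMeasure]

theorem measurePreserving_smul_sphere_Ioi :
    MeasurePreserving (fun x : sphere (0 : E) 1 × Ioi (0 : ℝ) => (x.2 : ℝ) • (x.1 : E))
      (μ.toSphere.prod (Measure.volumeIoiPow (finrank ℝ E - 1))) μ := by
  have hval : MeasurePreserving ((↑) : ({0}ᶜ : Set E) → E) (μ.comap (↑)) μ := by
    refine ⟨measurable_subtype_coe, ?_⟩
    rw [(MeasurableEmbedding.subtype_coe (measurableSet_singleton 0).compl).map_comap,
      Subtype.range_coe, restrict_compl_singleton]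
  exact hval.comp (MeasurePreserving.symm (homeomorphUnitSphereProd E).toMeasurableEquiv
    μ.measurePreserving_homeomorphUnitSphereProd)

theorem measurePreserving_velocitiesOfCenterPolar {a b : ℝ} (hab : a + b = 1) :
    MeasurePreserving (velocitiesOfCenterPolar a b)
      (μ.prod ((μ.toSphere.prod (Measure.volumeIoiPow (finrank ℝ E - 1))).prod μ.toSphere))
      (μ.prod (μ.prod μ.toSphere)) := by
  -- not found by instance search inside the nested product below
  have : SFinite (μ.toSphere.prod (Measure.volumeIoiPow (finrank ℝ E - 1))) := inferInstance
  exact (measurePreserving_prodAssoc μ μ μ.toSphere).comp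
    (((measurePreserving_add_smul_sub_smul μ hab).prod (MeasurePreserving.id μ.toSphere)).comp
      ((MeasurePreserving.symm _ (measurePreserving_prodAssoc μ μ μ.toSphere)).comp
        ((MeasurePreserving.id μ).prod ((measurePreserving_smul_sphere_Ioi μ).prod
          (MeasurePreserving.id μ.toSphere)))))

end CentreOfMassPolar

section Collision
variable {D : ℕ} {mp mq : ℝ}

theorem cosDev_add_smul_sub_sub_smul {a b : ℝ} (hab : a + b = 1) (u : EuclideanSpace ℝ (Fin D))
    (s σ : sphere (0 : EuclideanSpace ℝ (Fin D)) 1) (r : Ioi (0 : ℝ)) :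
    cosDev D (u + b • (r : ℝ) • (s : EuclideanSpace ℝ (Fin D)))
      (u - a • (r : ℝ) • (s : EuclideanSpace ℝ (Fin D))) σ
      = inner ℝ (s : EuclideanSpace ℝ (Fin D)) σ := by
  rw [cosDev, add_smul_sub_sub_smul hab, norm_smul, norm_eq_of_mem_sphere, mul_one,
    Real.norm_of_nonneg r.2.le, smul_smul, inv_mul_cancel₀ r.2.ne', one_smul]

theorem vPrime_add_smul_sub_sub_smul (hM : mp + mq ≠ 0) (u : EuclideanSpace ℝ (Fin D))
    (s σ : sphere (0 : EuclideanSpace ℝ (Fin D)) 1) (r : Ioi (0 : ℝ)) :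
    vPrime D mp mq (u + (mq / (mp + mq)) • (r : ℝ) • (s : EuclideanSpace ℝ (Fin D)))
      (u - (mp / (mp + mq)) • (r : ℝ) • (s : EuclideanSpace ℝ (Fin D))) σ
      = u + (mq / (mp + mq)) • (r : ℝ) • (σ : EuclideanSpace ℝ (Fin D)) := by
  rw [vPrime, norm_add_smul_sub_sub_smul (by field_simp)]
  match_scalars
  · field_simp
  · ring
  · ring

theorem vsPrime_add_smul_sub_sub_smul (hM : mp + mq ≠ 0) (u : EuclideanSpace ℝ (Fin D))
    (s σ : sphere (0 : EuclideanSpace ℝ (Fin D)) 1) (r : Ioi (0 : ℝ)) :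
    vsPrime D mp mq (u + (mq / (mp + mq)) • (r : ℝ) • (s : EuclideanSpace ℝ (Fin D)))
      (u - (mp / (mp + mq)) • (r : ℝ) • (s : EuclideanSpace ℝ (Fin D))) σ
      = u - (mp / (mp + mq)) • (r : ℝ) • (σ : EuclideanSpace ℝ (Fin D)) := by
  rw [vsPrime, norm_add_smul_sub_sub_smul (by field_simp)]
  match_scalars
  · field_simp
  · ring
  · ring

noncomputable def lossIntegrand (D : ℕ) (B : ℝ → ℝ → ℝ) (f g : EuclideanSpace ℝ (Fin D) → ℝ)
    (w : EuclideanSpace ℝ (Fin D) × EuclideanSpace ℝ (Fin D) ×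
      sphere (0 : EuclideanSpace ℝ (Fin D)) 1) : ℝ :=
  B ‖w.1 - w.2.1‖ (cosDev D w.1 w.2.1 w.2.2) * (f w.1 * g w.2.1)

noncomputable def gainIntegrand (D : ℕ) (mp mq : ℝ) (B : ℝ → ℝ → ℝ)
    (f g : EuclideanSpace ℝ (Fin D) → ℝ)
    (w : EuclideanSpace ℝ (Fin D) × EuclideanSpace ℝ (Fin D) ×
      sphere (0 : EuclideanSpace ℝ (Fin D)) 1) : ℝ :=
  B ‖w.1 - w.2.1‖ (cosDev D w.1 w.2.1 w.2.2)
    * (f (vPrime D mp mq w.1 w.2.1 w.2.2) * g (vsPrime D mp mq w.1 w.2.1 w.2.2))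

theorem gainIntegrand_velocitiesOfCenterPolar_swap (hM : mp + mq ≠ 0) (B : ℝ → ℝ → ℝ)
    (f g : EuclideanSpace ℝ (Fin D) → ℝ) (u : EuclideanSpace ℝ (Fin D))
    (s σ : sphere (0 : EuclideanSpace ℝ (Fin D)) 1) (r : Ioi (0 : ℝ)) :
    gainIntegrand D mp mq B f g
        (velocitiesOfCenterPolar (mp / (mp + mq)) (mq / (mp + mq)) (u, (σ, r), s))
      = lossIntegrand D B f g
        (velocitiesOfCenterPolar (mp / (mp + mq)) (mq / (mp + mq)) (u, (s, r), σ)) := by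
  have hab : mp / (mp + mq) + mq / (mp + mq) = 1 := by field_simp
  simp only [gainIntegrand, lossIntegrand, velocitiesOfCenterPolar]
  rw [norm_add_smul_sub_sub_smul hab, norm_add_smul_sub_sub_smul hab,
    cosDev_add_smul_sub_sub_smul hab, cosDev_add_smul_sub_sub_smul hab,
    vPrime_add_smul_sub_sub_smul hM, vsPrime_add_smul_sub_sub_smul hM, real_inner_comm]

end Collision

theorem multispecies_boltzmann_mass_conservation_general
    (D : ℕ) (hD : 2 ≤ D) (mp mq : ℝ) (hmp : 0 < mp) (hmq : 0 < mq)
    (B : ℝ → ℝ → ℝ)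
    (f g : EuclideanSpace ℝ (Fin D) → ℝ)
    (hint_pre : Integrable
      (fun w : EuclideanSpace ℝ (Fin D) × EuclideanSpace ℝ (Fin D) ×
          Metric.sphere (0 : EuclideanSpace ℝ (Fin D)) 1 =>
        B ‖w.1 - w.2.1‖ (cosDev D w.1 w.2.1 w.2.2) * (f w.1 * g w.2.1))
      (volume.prod (volume.prod (sphereMeasure D))))
    (hint_post : Integrable
      (fun w : EuclideanSpace ℝ (Fin D) × EuclideanSpace ℝ (Fin D) ×
          Metric.sphere (0 : EuclideanSpace ℝ (Fin D)) 1 =>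
        B ‖w.1 - w.2.1‖ (cosDev D w.1 w.2.1 w.2.2)
          * (f (vPrime D mp mq w.1 w.2.1 w.2.2) * g (vsPrime D mp mq w.1 w.2.1 w.2.2)))
      (volume.prod (volume.prod (sphereMeasure D)))) :
    (∫ v, ∫ vs, ∫ σ : Metric.sphere (0 : EuclideanSpace ℝ (Fin D)) 1,
        B ‖v - vs‖ (cosDev D v vs σ)
          * (f (vPrime D mp mq v vs σ) * g (vsPrime D mp mq v vs σ) - f v * g vs)
      ∂(sphereMeasure D)) = 0 := by
  have : Nonempty (Fin D) := ⟨⟨0, by omega⟩⟩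
  have hM : mp + mq ≠ 0 := by positivity
  have hab : mp / (mp + mq) + mq / (mp + mq) = 1 := by field_simp
  unfold sphereMeasure at hint_pre hint_post ⊢
  set μ : Measure (EuclideanSpace ℝ (Fin D)) := volume
  set P := μ.prod (μ.prod μ.toSphere)
  replace hint_pre : Integrable (lossIntegrand D B f g) P := hint_pre
  replace hint_post : Integrable (gainIntegrand D mp mq B f g) P := hint_post
  have hgain_eq_loss : ∫ w, gainIntegrand D mp mq B f g w ∂P = ∫ w, lossIntegrand D B f g w ∂P :=
    (measurePreserving_velocitiesOfCenterPolar μ hab).integral_eq_of_comp_comp_eq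
      (measurePreserving_swap_snd_fst_fst_snd_snd _ _ _) hint_post.1 hint_pre.1
      fun ⟨u, ⟨s, r⟩, σ⟩ => gainIntegrand_velocitiesOfCenterPolar_swap hM B f g u s σ r
  calc _ = ∫ w, (gainIntegrand D mp mq B f g w - lossIntegrand D B f g w) ∂P := by
        simp only [mul_sub]
        exact integral_integral_integral (hint_post.sub hint_pre)
    _ = 0 := by rw [integral_sub hint_post hint_pre, hgain_eq_loss, sub_self]

/-- Mass conservation for the multispecies Boltzmann collision operator:
`∫ Q_{p,q}[f,g](v) dv = 0`, i.e. the constant function `1` is a collision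
invariant of each interspecies collision operator. -/
theorem multispecies_boltzmann_mass_conservation
    (D : ℕ) (hD : 2 ≤ D) (mp mq : ℝ) (hmp : 0 < mp) (hmq : 0 < mq)
    (B : ℝ → ℝ → ℝ) (hB_meas : Measurable (Function.uncurry B))
    (hB_nonneg : ∀ x y, 0 ≤ B x y)
    (f g : EuclideanSpace ℝ (Fin D) → ℝ)
    (hf_meas : Measurable f) (hg_meas : Measurable g)
    (hf_nonneg : ∀ v, 0 ≤ f v) (hg_nonneg : ∀ v, 0 ≤ g v)
    (hint_pre : Integrable
      (fun w : EuclideanSpace ℝ (Fin D) × EuclideanSpace ℝ (Fin D) ×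
          Metric.sphere (0 : EuclideanSpace ℝ (Fin D)) 1 =>
        B ‖w.1 - w.2.1‖ (cosDev D w.1 w.2.1 w.2.2) * (f w.1 * g w.2.1))
      (volume.prod (volume.prod (sphereMeasure D))))
    (hint_post : Integrable
      (fun w : EuclideanSpace ℝ (Fin D) × EuclideanSpace ℝ (Fin D) ×
          Metric.sphere (0 : EuclideanSpace ℝ (Fin D)) 1 =>
        B ‖w.1 - w.2.1‖ (cosDev D w.1 w.2.1 w.2.2)
          * (f (vPrime D mp mq w.1 w.2.1 w.2.2) * g (vsPrime D mp mq w.1 w.2.1 w.2.2)))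
      (volume.prod (volume.prod (sphereMeasure D)))) :
    (∫ v, ∫ vs, ∫ σ : Metric.sphere (0 : EuclideanSpace ℝ (Fin D)) 1,
        B ‖v - vs‖ (cosDev D v vs σ)
          * (f (vPrime D mp mq v vs σ) * g (vsPrime D mp mq v vs σ) - f v * g vs)
      ∂(sphereMeasure D)) = 0 :=
  multispecies_boltzmann_mass_conservation_general D hD mp mq hmp hmq B f g hint_pre hint_post
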